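/- Let F be a finite family of countable graphs such that (1) at least one graph of F is isomorphic to the Rado graph R, and (2) every graph in F has infinite domination number. Then FP(F, R) has a solution. -/

import Mathlib

/-- The Rado graph on `ℕ`: for `i < j`, `i` and `j` are adjacent iff the `i`-th bit
of the binary representation of `j` is `1`. -/
def Rado : SimpleGraph ℕ :=
  SimpleGraph.fromRel (fun i j => i < j ∧ Nat.testBit j i)

/-- A set `D` of vertices is dominating if every vertex not in `D` is adjacent to
some vertex of `D`. -/
def IsDominatingSet {V : Type*} (F : SimpleGraph V) (D : Set V) : Prop :=
  ∀ v ∉ D, ∃ d ∈ D, F.Adj v d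

/-- An indexed family `G` of graphs is a factorization of `Λ`: each `G a` is a
(spanning) subgraph of `Λ` and the edge sets of the `G a` partition the edge set
of `Λ`. -/
def IsFactorization {A V : Type*} (Λ : SimpleGraph V) (G : A → SimpleGraph V) : Prop :=
  (∀ a, G a ≤ Λ) ∧ ∀ e ∈ Λ.edgeSet, ∃! a, e ∈ (G a).edgeSet

/-!
A graph has the extension property if for any disjoint finite vertex sets `s` and `t` some vertex
outside them is adjacent to every vertex of `s` and to none of `t`. The Rado graph has it, and by
back-and-forth any two countable graphs with it are isomorphic.

The members of the family other than a copy of `R` are peeled off `R` one at a time. A countable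
graph `F` without a finite dominating set is spread over all vertices of an extension-closed graph
`Λ` by a back-and-forth construction which also reserves, for every extension requirement, a
witness in `Λ \ F`. Going forth, a vertex goes to a fresh vertex adjacent to the images of its
placed neighbours; going back, a target vertex receives a vertex with no neighbour among the
finitely many placed ones, which exists because no finite set dominates `F`, so no edge is
created. Each new image or reserved edge has an endpoint unused by the other kind, so the two
never meet. Hence `Λ \ F` keeps the extension property, and what is left of `R` at the end is
isomorphic to `R`.
-/

open Finset Order Function

theorem Nat.testBit_sum_two_pow (s : Finset ℕ) (i : ℕ) :
    (∑ j ∈ s, 2 ^ j).testBit i ↔ i ∈ s := by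
  rw [← Nat.mem_bitIndices, ← List.mem_toFinset, toFinset_bitIndices_sum_two_pow]

theorem Finset.forall₂_mem_insert_of_symmetric {α : Type*} [DecidableEq α] {Q : α → α → Prop}
    (hQ : ∀ p q, Q p q → Q q p) {a : α} {f : Finset α} (haa : Q a a) (ha : ∀ q ∈ f, Q a q)
    (hf : ∀ p ∈ f, ∀ q ∈ f, Q p q) : ∀ p ∈ insert a f, ∀ q ∈ insert a f, Q p q := by
  simp only [forall_mem_insert]
  exact ⟨⟨haa, ha⟩, fun p hp => ⟨hQ _ _ (ha p hp), hf p hp⟩⟩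

theorem pairwise_disjoint_option_elim {α ι : Type*} [PartialOrder α] [OrderBot α] {a : α}
    {f : ι → α} (ha : ∀ i, Disjoint a (f i)) (hf : Pairwise (Disjoint on f)) :
    Pairwise (Disjoint on fun o : Option ι => o.elim a f) := by
  rintro (_ | i) (_ | j) hij
  · exact absurd rfl hij
  · exact ha j
  · exact (ha i).symm
  · exact hf fun h => hij (congrArg some h)

theorem isFactorization_of_pairwise_disjoint {A V : Type*} {Λ : SimpleGraph V}
    {G : A → SimpleGraph V} (hG : Pairwise (Disjoint on G)) (hsup : ⨆ a, G a = Λ) :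
    IsFactorization Λ G := by
  refine ⟨fun a => hsup ▸ le_iSup G a, fun e he => ?_⟩
  rw [← hsup, SimpleGraph.edgeSet_iSup, Set.mem_iUnion] at he
  obtain ⟨a, ha⟩ := he
  refine ⟨a, ha, fun b hb => ?_⟩
  by_contra hba
  exact Set.disjoint_left.1 (SimpleGraph.disjoint_edgeSet.2 (hG hba)) hb ha

theorem isFactorization_option_elim {ι V : Type*} {Λ : SimpleGraph V} {G : ι → SimpleGraph V}
    (hle : ∀ i, G i ≤ Λ) (hG : Pairwise (Disjoint on G)) :
    IsFactorization Λ fun o : Option ι => o.elim (Λ \ ⨆ i, G i) G :=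
  isFactorization_of_pairwise_disjoint
    (pairwise_disjoint_option_elim (fun i => disjoint_sdiff_self_left.mono_right (le_iSup G i)) hG)
    (by rw [iSup_option_elim, sdiff_sup_cancel (iSup_le hle)])

theorem IsFactorization.comp_equiv {ι ι' V : Type*} {Λ : SimpleGraph V} {G : ι → SimpleGraph V}
    (h : IsFactorization Λ G) (e : ι' ≃ ι) : IsFactorization Λ (G ∘ e) := by
  refine ⟨fun i => h.1 (e i), fun x hx => ?_⟩
  obtain ⟨i, hi, huniq⟩ := h.2 x hx
  exact ⟨e.symm i, by simpa using hi, fun j hj => e.eq_symm_apply.2 (huniq _ hj)⟩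

section Limit

variable {V W P : Type*} [Preorder P] {graph : P → Finset (V × W)}

theorem exists_equiv_of_ideal (hgraph : Monotone graph)
    (hinj : ∀ c, ∀ p ∈ graph c, ∀ q ∈ graph c, p.1 = q.1 ↔ p.2 = q.2) (I : Ideal P)
    (hdom : ∀ x, ∃ c ∈ I, ∃ w, (x, w) ∈ graph c) (hran : ∀ w, ∃ c ∈ I, ∃ x, (x, w) ∈ graph c) :
    ∃ φ : V ≃ W, ∀ x y, ∀ d ∈ I, ∃ c ∈ I, d ≤ c ∧ (x, φ x) ∈ graph c ∧ (y, φ y) ∈ graph c := by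
  choose c hc φ hφ using hdom
  have hI : ∀ {d e}, d ∈ I → e ∈ I → ∃ c ∈ I, d ≤ c ∧ e ≤ c := fun hd he => I.directed _ hd _ he
  have hmatch : ∀ {x d w y}, d ∈ I → (y, w) ∈ graph d → (x = y ↔ φ x = w) := by
    intro x d w y hd hw
    obtain ⟨e, -, hxe, hde⟩ := hI (hc x) hd
    exact hinj e _ (hgraph hxe (hφ x)) _ (hgraph hde hw)
  refine ⟨Equiv.ofBijective φ ⟨fun x y hxy => (hmatch (hc y) (hφ y)).2 hxy, fun w => ?_⟩, ?_⟩
  · obtain ⟨d, hd, x, hx⟩ := hran w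
    exact ⟨x, (hmatch hd hx).1 rfl⟩
  · intro x y d hd
    obtain ⟨e, he, hxe, hye⟩ := hI (hc x) (hc y)
    obtain ⟨c', hc', hec', hdc'⟩ := hI he hd
    exact ⟨c', hc', hdc', hgraph (hxe.trans hec') (hφ x), hgraph (hye.trans hec') (hφ y)⟩

end Limit

namespace SimpleGraph

variable {V W : Type*}

def HasExtensionProperty (G : SimpleGraph V) : Prop :=
  ∀ s t : Finset V, Disjoint s t → ∃ v ∉ s, v ∉ t ∧ (∀ u ∈ s, G.Adj v u) ∧ ∀ w ∈ t, ¬G.Adj v w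

theorem HasExtensionProperty.exists_notMem {G : SimpleGraph V} (hG : G.HasExtensionProperty)
    {s t : Finset V} (hst : Disjoint s t) (S : Finset V) :
    ∃ v ∉ S, (∀ u ∈ s, G.Adj v u) ∧ ∀ w ∈ t, ¬G.Adj v w := by
  classical
  obtain ⟨v, hvs, hv, hs, ht⟩ := hG s (t ∪ S \ s) (disjoint_union_right.2 ⟨hst, disjoint_sdiff⟩)
  exact ⟨v, fun hvS => hv (mem_union_right _ (mem_sdiff.2 ⟨hvS, hvs⟩)), hs,
    fun w hw => ht w (mem_union_left _ hw)⟩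

section BackAndForth

variable (Γ : SimpleGraph V) (Δ : SimpleGraph W)

def IsPartialIso (f : Finset (V × W)) : Prop :=
  ∀ p ∈ f, ∀ q ∈ f, (p.1 = q.1 ↔ p.2 = q.2) ∧ (Γ.Adj p.1 q.1 ↔ Δ.Adj p.2 q.2)

variable {Γ Δ} [DecidableEq V] [DecidableEq W] {f : Finset (V × W)}

theorem isPartialIso_image_swap :
    IsPartialIso Δ Γ (f.image Prod.swap) ↔ IsPartialIso Γ Δ f := by
  simp only [IsPartialIso, forall_mem_image, Prod.fst_swap, Prod.snd_swap]
  exact forall₂_congr fun _ _ => forall₂_congr fun _ _ => and_congr iff_comm iff_comm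

theorem IsPartialIso.forth (hf : IsPartialIso Γ Δ f) (hΔ : Δ.HasExtensionProperty) (x : V) :
    ∃ w, IsPartialIso Γ Δ (insert (x, w) f) := by
  classical
  by_cases hx : ∃ w, (x, w) ∈ f
  · obtain ⟨w, hw⟩ := hx
    exact ⟨w, by rwa [insert_eq_of_mem hw]⟩
  simp only [not_exists] at hx
  set s := (f.filter fun p => Γ.Adj x p.1).image Prod.snd
  set t := (f.filter fun p => ¬Γ.Adj x p.1).image Prod.snd
  have hst : Disjoint s t := by
    simp only [s, t, Finset.disjoint_left, mem_image, mem_filter]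
    rintro _ ⟨p, ⟨hp, hxp⟩, rfl⟩ ⟨q, ⟨hq, hxq⟩, hqp⟩
    exact hxq ((hf q hq p hp).1.2 hqp ▸ hxp)
  obtain ⟨w, hw, hs, ht⟩ := hΔ.exists_notMem hst (f.image Prod.snd)
  refine ⟨w, forall₂_mem_insert_of_symmetric ?_ ⟨iff_of_true rfl rfl,
    iff_of_false (Γ.irrefl) (Δ.irrefl)⟩ (fun q hq => ?_) hf⟩
  · exact fun p q h => ⟨eq_comm.trans (h.1.trans eq_comm),
      (Γ.adj_comm _ _).trans (h.2.trans (Δ.adj_comm _ _))⟩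
  refine ⟨iff_of_false (fun (h : x = q.1) => hx q.2 (by rwa [h]))
    fun (h : w = q.2) => hw (by rw [h]; exact mem_image_of_mem _ hq), ?_⟩
  by_cases hxq : Γ.Adj x q.1
  · exact iff_of_true hxq (hs _ (mem_image_of_mem _ (mem_filter.2 ⟨hq, hxq⟩)))
  · exact iff_of_false hxq (ht _ (mem_image_of_mem _ (mem_filter.2 ⟨hq, hxq⟩)))

theorem IsPartialIso.back (hf : IsPartialIso Γ Δ f) (hΓ : Γ.HasExtensionProperty) (w : W) :
    ∃ x, IsPartialIso Γ Δ (insert (x, w) f) := by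
  obtain ⟨x, hx⟩ := (isPartialIso_image_swap.2 hf).forth hΓ w
  exact ⟨x, isPartialIso_image_swap.1 (by rwa [image_insert])⟩

end BackAndForth

theorem HasExtensionProperty.nonempty_iso [Countable V] [Countable W] {Γ : SimpleGraph V}
    {Δ : SimpleGraph W} (hΓ : Γ.HasExtensionProperty) (hΔ : Δ.HasExtensionProperty) :
    Nonempty (Γ ≃g Δ) := by
  classical
  let P := {f : Finset (V × W) // IsPartialIso Γ Δ f}
  have := Encodable.ofCountable (V ⊕ W)
  let D : V ⊕ W → Cofinal P := Sum.elim
    (fun x => ⟨{f | ∃ w, (x, w) ∈ f.1}, fun f =>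
      (f.2.forth hΔ x).elim fun w hw => ⟨⟨_, hw⟩, ⟨w, mem_insert_self _ _⟩, subset_insert _ _⟩⟩)
    (fun w => ⟨{f | ∃ x, (x, w) ∈ f.1}, fun f =>
      (f.2.back hΓ w).elim fun x hx => ⟨⟨_, hx⟩, ⟨x, mem_insert_self _ _⟩, subset_insert _ _⟩⟩)
  let f₀ : P := ⟨∅, by simp [IsPartialIso]⟩
  let I := idealOfCofinals f₀ D
  obtain ⟨φ, hφ⟩ := exists_equiv_of_ideal (graph := Subtype.val) (fun _ _ h => h)
    (fun f p hp q hq => (f.2 p hp q hq).1) I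
    (fun x => (cofinal_meets_idealOfCofinals f₀ D (.inl x)).elim fun f hf => ⟨f, hf.2, hf.1⟩)
    (fun w => (cofinal_meets_idealOfCofinals f₀ D (.inr w)).elim fun f hf => ⟨f, hf.2, hf.1⟩)
  refine ⟨⟨φ, fun {x y} => ?_⟩⟩
  obtain ⟨f, -, -, hx, hy⟩ := hφ x y f₀ (mem_idealOfCofinals f₀ D)
  exact (f.2 _ hx _ hy).2.symm

section SpanningCopy

variable (F : SimpleGraph V) (Λ : SimpleGraph W)

def CopyCompatible (R : Finset (Sym2 W)) (p q : V × W) : Prop :=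
  (p.1 = q.1 ↔ p.2 = q.2) ∧ (F.Adj p.1 q.1 → Λ.Adj p.2 q.2 ∧ s(p.2, q.2) ∉ R)

variable {F Λ} in
theorem CopyCompatible.symm {R : Finset (Sym2 W)} {p q : V × W} (h : CopyCompatible F Λ R p q) :
    CopyCompatible F Λ R q p :=
  ⟨eq_comm.trans (h.1.trans eq_comm), fun hqp =>
    ⟨(h.2 hqp.symm).1.symm, Sym2.eq_swap (a := q.2) ▸ (h.2 hqp.symm).2⟩⟩

/-- A finite stage in placing `F` inside `Λ`; the edges in `reserved` are promised to the
complement `Λ \ F`, so no `F`-edge may be sent onto them. -/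
structure PartialCopy where
  graph : Finset (V × W)
  reserved : Finset (Sym2 W)
  compatible : ∀ p ∈ graph, ∀ q ∈ graph, CopyCompatible F Λ reserved p q
  reserved_subset : ∀ e ∈ reserved, e ∈ Λ.edgeSet

instance : Preorder (PartialCopy F Λ) := Preorder.lift fun c => (c.graph, c.reserved)

variable {F Λ}

namespace PartialCopy

theorem le_def {c d : PartialCopy F Λ} : c ≤ d ↔ c.graph ⊆ d.graph ∧ c.reserved ⊆ d.reserved :=
  Iff.rfl

theorem forth (hΛ : Λ.HasExtensionProperty) (c : PartialCopy F Λ) (x : V) :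
    ∃ d, c ≤ d ∧ ∃ w, (x, w) ∈ d.graph := by
  classical
  by_cases hx : ∃ w, (x, w) ∈ c.graph
  · exact ⟨c, le_rfl, hx⟩
  simp only [not_exists] at hx
  obtain ⟨w, hw, hadj, -⟩ := hΛ.exists_notMem
    (disjoint_empty_right ((c.graph.filter fun p => F.Adj x p.1).image Prod.snd))
    (c.graph.image Prod.snd ∪ c.reserved.biUnion Sym2.toFinset)
  simp only [mem_union, mem_image, mem_biUnion, Sym2.mem_toFinset, not_or, not_exists,
    not_and] at hw
  refine ⟨⟨insert (x, w) c.graph, c.reserved, forall₂_mem_insert_of_symmetric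
    (fun _ _ => CopyCompatible.symm) ⟨iff_of_true rfl rfl, fun h => absurd h (F.irrefl)⟩
    (fun q hq => ?_) c.compatible, c.reserved_subset⟩, ⟨subset_insert _ _, le_rfl⟩,
    w, mem_insert_self _ _⟩
  refine ⟨iff_of_false (fun (h : x = q.1) => hx q.2 (by rwa [h]))
    fun (h : w = q.2) => hw.1 q hq h.symm, fun hxq => ⟨hadj _ (mem_image_of_mem _
    (mem_filter.2 ⟨hq, hxq⟩)), fun hres => hw.2 _ hres (Sym2.mem_mk_left _ _)⟩⟩

theorem back (hF : ∀ D, IsDominatingSet F D → D.Infinite) (c : PartialCopy F Λ) (w : W) :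
    ∃ d, c ≤ d ∧ ∃ x, (x, w) ∈ d.graph := by
  classical
  by_cases hw : ∃ x, (x, w) ∈ c.graph
  · exact ⟨c, le_rfl, hw⟩
  simp only [not_exists] at hw
  obtain ⟨x, hx, hxD⟩ :
      ∃ x ∉ c.graph.image Prod.fst, ∀ d ∈ c.graph.image Prod.fst, ¬F.Adj x d := by
    by_contra! h
    exact hF _ h (c.graph.image Prod.fst).finite_toSet
  refine ⟨⟨insert (x, w) c.graph, c.reserved, forall₂_mem_insert_of_symmetric
    (fun _ _ => CopyCompatible.symm) ⟨iff_of_true rfl rfl, fun h => absurd h (F.irrefl)⟩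
    (fun q hq => ?_) c.compatible, c.reserved_subset⟩, ⟨subset_insert _ _, le_rfl⟩,
    x, mem_insert_self _ _⟩
  refine ⟨iff_of_false (fun (h : x = q.1) => hx (h ▸ mem_image_of_mem _ hq))
    fun (h : w = q.2) => hw q.1 (by rwa [h]),
    fun hxq => absurd hxq (hxD _ (mem_image_of_mem _ hq))⟩

def Reserves (c : PartialCopy F Λ) (s t : Finset W) : Prop :=
  ∃ v ∉ s, v ∉ t ∧ (∀ u ∈ s, s(v, u) ∈ c.reserved) ∧ ∀ w ∈ t, ¬Λ.Adj v w

theorem reserve (hΛ : Λ.HasExtensionProperty) (c : PartialCopy F Λ) {s t : Finset W}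
    (hst : Disjoint s t) : ∃ d, c ≤ d ∧ d.Reserves s t := by
  classical
  obtain ⟨v, hv, hs, ht⟩ := hΛ.exists_notMem hst (s ∪ t ∪ c.graph.image Prod.snd)
  simp only [mem_union, mem_image, not_or, not_exists, not_and] at hv
  refine ⟨⟨c.graph, c.reserved ∪ s.image fun u => s(v, u), fun p hp q hq => ?_, ?_⟩,
    ⟨le_rfl, subset_union_left⟩, v, hv.1.1, hv.1.2, fun u hu => mem_union_right _
    (mem_image_of_mem _ hu), ht⟩
  · obtain ⟨hpq, hadj⟩ := c.compatible p hp q hq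
    refine ⟨hpq, fun hxy => ⟨(hadj hxy).1, ?_⟩⟩
    simp only [mem_union, mem_image, not_or, not_exists, not_and]
    refine ⟨(hadj hxy).2, fun u _ hu => ?_⟩
    rcases Sym2.eq_iff.1 hu with ⟨h, -⟩ | ⟨h, -⟩
    exacts [hv.2 p hp h.symm, hv.2 q hq h.symm]
  · simp only [mem_union, mem_image]
    rintro e (he | ⟨u, hu, rfl⟩)
    exacts [c.reserved_subset e he, hs u hu]

end PartialCopy

theorem HasExtensionProperty.exists_spanning_copy [Countable V] [Countable W]
    (hΛ : Λ.HasExtensionProperty) (hF : ∀ D, IsDominatingSet F D → D.Infinite) :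
    ∃ φ : V ≃ W, F.map φ ≤ Λ ∧ (Λ \ F.map φ).HasExtensionProperty := by
  classical
  have := Encodable.ofCountable (V ⊕ W ⊕ Finset W × Finset W)
  let D : V ⊕ W ⊕ Finset W × Finset W → Cofinal (PartialCopy F Λ) := Sum.elim
    (fun x => ⟨{c | ∃ w, (x, w) ∈ c.graph}, fun c => (c.forth hΛ x).imp fun _ => And.symm⟩)
    (Sum.elim
      (fun w => ⟨{c | ∃ x, (x, w) ∈ c.graph}, fun c => (c.back hF w).imp fun _ => And.symm⟩)
      fun st => ⟨{c | Disjoint st.1 st.2 → c.Reserves st.1 st.2}, fun c => by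
        by_cases hst : Disjoint st.1 st.2
        · exact (c.reserve hΛ hst).imp fun _ h => ⟨fun _ => h.2, h.1⟩
        · exact ⟨c, fun h => absurd h hst, le_rfl⟩⟩)
  let c₀ : PartialCopy F Λ := ⟨∅, ∅, by simp, by simp⟩
  let I := idealOfCofinals c₀ D
  obtain ⟨φ, hφ⟩ := exists_equiv_of_ideal (graph := PartialCopy.graph)
    (fun _ _ h => (PartialCopy.le_def.1 h).1)
    (fun c p hp q hq => (c.compatible p hp q hq).1) I
    (fun x => (cofinal_meets_idealOfCofinals c₀ D (.inl x)).elim fun c hc => ⟨c, hc.2, hc.1⟩)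
    (fun w => (cofinal_meets_idealOfCofinals c₀ D (.inr (.inl w))).elim
      fun c hc => ⟨c, hc.2, hc.1⟩)
  have hmap : ∀ {x y}, F.Adj x y → ∀ d ∈ I, ∃ c, d ≤ c ∧
      Λ.Adj (φ x) (φ y) ∧ s(φ x, φ y) ∉ c.reserved := by
    intro x y hxy d hd
    obtain ⟨c, -, hdc, hx, hy⟩ := hφ x y d hd
    exact ⟨c, hdc, (c.compatible _ hx _ hy).2 hxy⟩
  refine ⟨φ, fun a b hab => ?_, fun s t hst => ?_⟩
  · obtain ⟨-, x, y, hxy, rfl, rfl⟩ := (map_adj' _ _ _ _).1 hab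
    obtain ⟨c, -, h, -⟩ := hmap hxy c₀ (mem_idealOfCofinals c₀ D)
    exact h
  obtain ⟨c, hcD, hcI⟩ := cofinal_meets_idealOfCofinals c₀ D (.inr (.inr (s, t)))
  obtain ⟨v, hvs, hvt, hres, hnadj⟩ := hcD hst
  refine ⟨v, hvs, hvt, fun u hu => ⟨c.reserved_subset _ (hres u hu), fun hvu => ?_⟩,
    fun w hw h => hnadj w hw h.1⟩
  obtain ⟨-, x, y, hxy, rfl, rfl⟩ := (map_adj' _ _ _ _).1 hvu
  obtain ⟨d, hcd, -, h⟩ := hmap hxy c hcI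
  exact h ((PartialCopy.le_def.1 hcd).2 (hres _ hu))

end SpanningCopy

theorem HasExtensionProperty.exists_pairwise_disjoint_copies {B W : Type*} [Finite B]
    [Countable W] {V : B → Type*} [∀ b, Countable (V b)] {F : ∀ b, SimpleGraph (V b)}
    (hF : ∀ b D, IsDominatingSet (F b) D → D.Infinite) {Λ : SimpleGraph W}
    (hΛ : Λ.HasExtensionProperty) :
    ∃ G : B → SimpleGraph W, (∀ b, G b ≤ Λ) ∧ Pairwise (Disjoint on G) ∧
      (Λ \ ⨆ b, G b).HasExtensionProperty ∧ ∀ b, Nonempty (F b ≃g G b) := by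
  induction B using Finite.induction_empty_option generalizing Λ with
  | of_equiv e ih =>
    obtain ⟨G, hle, hdisj, hleft, hiso⟩ := ih (V := fun a => V (e a)) (fun a => hF (e a)) hΛ
    refine ⟨fun b => G (e.symm b), fun b => hle _, hdisj.comp_of_injective e.symm.injective,
      by rwa [e.symm.iSup_comp (g := G)], fun b => ?_⟩
    obtain ⟨a, rfl⟩ := e.surjective b
    simpa only [e.symm_apply_apply] using hiso a
  | h_empty =>
    exact ⟨isEmptyElim, isEmptyElim, isEmptyElim, by rwa [iSup_of_empty, sdiff_bot], isEmptyElim⟩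
  | h_option ih =>
    obtain ⟨φ, hφ, hΛ'⟩ := hΛ.exists_spanning_copy (hF none)
    obtain ⟨G, hle, hdisj, hleft, hiso⟩ :=
      ih (V := fun a => V (some a)) (fun a => hF (some a)) hΛ'
    refine ⟨fun o => o.elim ((F none).map φ) G, ?_, pairwise_disjoint_option_elim
      (fun a => disjoint_sdiff_self_right.mono_right (hle a)) hdisj, ?_, ?_⟩
    · rintro (_ | a)
      exacts [hφ, (hle a).trans sdiff_le]
    · rwa [iSup_option_elim, ← sdiff_sdiff_left]
    · rintro (_ | a)
      exacts [⟨Iso.map φ _⟩, hiso a]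

end SimpleGraph

theorem rado_adj_of_lt {i j : ℕ} (h : i < j) : Rado.Adj j i ↔ j.testBit i := by
  simp [Rado, SimpleGraph.fromRel_adj, h, h.ne', lt_asymm h]

theorem rado_hasExtensionProperty : Rado.HasExtensionProperty := by
  intro s t hst
  obtain ⟨N, hN⟩ := t.exists_nat_subset_range
  have hlt : ∀ i ∈ s ∪ t, i < ∑ j ∈ insert N s, 2 ^ j := by
    intro i hi
    rcases mem_union.1 hi with hi | hi
    · exact lt_geomSum_of_mem le_rfl (mem_insert_of_mem hi)
    · exact (mem_range.1 (hN hi)).trans (lt_geomSum_of_mem le_rfl (mem_insert_self N s))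
  refine ⟨_, fun hv => (hlt _ (mem_union_left _ hv)).false,
    fun hv => (hlt _ (mem_union_right _ hv)).false, fun u hu => ?_, fun w hw => ?_⟩
  · rw [rado_adj_of_lt (hlt u (mem_union_left _ hu)), Nat.testBit_sum_two_pow]
    exact mem_insert_of_mem hu
  · rw [rado_adj_of_lt (hlt w (mem_union_right _ hw)), Nat.testBit_sum_two_pow, mem_insert,
      not_or]
    exact ⟨(mem_range.1 (hN hw)).ne, disjoint_right.1 hst hw⟩

/-- if `𝓕` is a finite family of countable graphs such that at least
one member is isomorphic to the Rado graph and every member has infinite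
domination number, then `FP(𝓕, R)` has a solution. -/
theorem stmt_6 {A : Type*} [Finite A] (V : A → Type*) [∀ a, Countable (V a)]
    (F : ∀ a, SimpleGraph (V a))
    (h1 : ∃ a, Nonempty (F a ≃g Rado))
    (h2 : ∀ a (D : Set (V a)), IsDominatingSet (F a) D → D.Infinite) :
    ∃ G : A → SimpleGraph ℕ, IsFactorization Rado G ∧ ∀ a, Nonempty (F a ≃g G a) := by
  classical
  obtain ⟨a₀, ⟨iso₀⟩⟩ := h1
  obtain ⟨G, hle, hdisj, hleft, hiso⟩ :=
    rado_hasExtensionProperty.exists_pairwise_disjoint_copies (B := {a // a ≠ a₀})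
      (F := fun b => F b) fun b => h2 b
  obtain ⟨isoL⟩ := rado_hasExtensionProperty.nonempty_iso hleft
  let G' : Option {a // a ≠ a₀} → SimpleGraph ℕ := fun o => o.elim (Rado \ ⨆ b, G b) G
  refine ⟨G' ∘ (Equiv.optionSubtypeNe a₀).symm,
    (isFactorization_option_elim hle hdisj).comp_equiv _, fun a => ?_⟩
  by_cases h : a = a₀
  · subst h
    simpa [G', Equiv.optionSubtypeNe_symm_self] using ⟨iso₀.trans isoL⟩
  · simpa [G', Equiv.optionSubtypeNe_symm_of_ne h] using hiso ⟨a, h⟩
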